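/- arXiv:hep-th/0506093 — 2 statements merged into one kernel-verified Lean document; each statement's English description precedes it below -/
import Mathlib

section
/- Let T_a : ℝⁿ → ℝ, a = 1,…,m, be smooth and let Λ : ℝⁿ → ℝ^{n×m} be such that the 1-form T' = Λ_i^a T_a dx^i is closed, with Λ having a smooth right inverse V : ℝⁿ → ℝ^{m×n} (V_a^i Λ_i^b = δ_a^b). Then there exist smooth functions C_{ab}^d with C_{ab}^d = -C_{ba}^d such that V_a^i ∂_i T_b − V_b^i ∂_i T_a = C_{ab}^d T_d. -/
open Finset

noncomputable def pd {n : ℕ} (f : (Fin n → ℝ) → ℝ) (x : Fin n → ℝ) (i : Fin n) : ℝ :=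
  fderiv ℝ f x (Pi.single i 1)

lemma pd_def {n : ℕ} (f : (Fin n → ℝ) → ℝ) (x : Fin n → ℝ) (i : Fin n) :
    fderiv ℝ f x (Pi.single i 1) = pd f x i := rfl

lemma pd_contDiff {n : ℕ} (f : (Fin n → ℝ) → ℝ) (hf : ContDiff ℝ (⊤ : ℕ∞) f) (i : Fin n) :
    ContDiff ℝ (⊤ : ℕ∞) fun x => pd f x i :=
  (hf.fderiv_right (by simp)).clm_apply contDiff_const

lemma pd_sum_mul {n m : ℕ} (f g : (Fin n → ℝ) → Fin m → ℝ)
    (hf : ∀ c, Differentiable ℝ fun y => f y c) (hg : ∀ c, Differentiable ℝ fun y => g y c)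
    (x : Fin n → ℝ) (i : Fin n) :
    pd (fun y => ∑ c, f y c * g y c) x i
      = ∑ c, (pd (fun y => f y c) x i * g x c + f x c * pd (fun y => g y c) x i) := by
  unfold pd
  rw [fderiv_fun_sum (A := fun c y => f y c * g y c) (fun c _ => ((hf c x).mul (hg c x)))]
  rw [ContinuousLinearMap.sum_apply]
  refine Finset.sum_congr rfl fun c _ => ?_
  rw [fderiv_fun_mul (hf c x) (hg c x)]
  simp only [ContinuousLinearMap.add_apply, ContinuousLinearMap.smul_apply, smul_eq_mul]
  ring

/-- If `Λ` is an integrating multiplier (the 1-form `Λ_i^a T_a dx^i`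
is closed) admitting a smooth right inverse `V` (`V_a^i Λ_i^b = δ_a^b`), then the
Lagrange-anchor integrability condition holds:
`V_a^i ∂_i T_b − V_b^i ∂_i T_a = C_{ab}^d T_d` for some smooth antisymmetric `C`. -/
theorem anchor_integrability_from_multiplier
    {n m : ℕ} (T : (Fin n → ℝ) → (Fin m → ℝ))
    (Λ : (Fin n → ℝ) → Fin n → Fin m → ℝ)
    (V : (Fin n → ℝ) → Fin m → Fin n → ℝ)
    (hT : ContDiff ℝ (⊤ : ℕ∞) T) (hΛ : ContDiff ℝ (⊤ : ℕ∞) Λ) (hV : ContDiff ℝ (⊤ : ℕ∞) V)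
    (hclosed : ∀ x i j,
      fderiv ℝ (fun y => ∑ a, Λ y i a * T y a) x (Pi.single j 1) =
      fderiv ℝ (fun y => ∑ a, Λ y j a * T y a) x (Pi.single i 1))
    (hright : ∀ x a b, ∑ i, V x a i * Λ x i b = if a = b then (1 : ℝ) else 0) :
    ∃ C : (Fin n → ℝ) → Fin m → Fin m → Fin m → ℝ,
      ContDiff ℝ (⊤ : ℕ∞) C ∧
      (∀ x a b d, C x a b d = - C x b a d) ∧
      (∀ x a b,
        (∑ i, V x a i * fderiv ℝ (fun y => T y b) x (Pi.single i 1)) -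
        (∑ i, V x b i * fderiv ℝ (fun y => T y a) x (Pi.single i 1)) =
        ∑ d, C x a b d * T x d) := by
  classical
  have hT' : ∀ c, ContDiff ℝ (⊤ : ℕ∞) fun y => T y c := fun c => contDiff_pi.mp hT c
  have hΛ' : ∀ i c, ContDiff ℝ (⊤ : ℕ∞) fun y => Λ y i c := fun i c =>
    contDiff_pi.mp (contDiff_pi.mp hΛ i) c
  have hV' : ∀ a i, ContDiff ℝ (⊤ : ℕ∞) fun y => V y a i := fun a i =>
    contDiff_pi.mp (contDiff_pi.mp hV a) i
  refine ⟨fun x a b d => ∑ i, ∑ j, V x a i * V x b j *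
      (pd (fun y => Λ y i d) x j - pd (fun y => Λ y j d) x i), ?_, ?_, ?_⟩
  · -- smoothness
    refine contDiff_pi.mpr fun a => contDiff_pi.mpr fun b => contDiff_pi.mpr fun d => ?_
    refine ContDiff.sum fun i _ => ContDiff.sum fun j _ => ?_
    exact ((hV' a i).mul (hV' b j)).mul
      ((pd_contDiff _ (hΛ' i d) j).sub (pd_contDiff _ (hΛ' j d) i))
  · -- antisymmetry
    intro x a b d
    dsimp only
    have h := Finset.sum_comm (s := (univ : Finset (Fin n))) (t := (univ : Finset (Fin n)))
      (f := fun i j => V x b i * V x a j *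
        (pd (fun y => Λ y i d) x j - pd (fun y => Λ y j d) x i))
    rw [h, ← Finset.sum_neg_distrib]
    refine Finset.sum_congr rfl fun j _ => ?_
    rw [← Finset.sum_neg_distrib]
    refine Finset.sum_congr rfl fun i _ => ?_
    ring
  · -- the integrability identity
    intro x a b
    dsimp only
    simp only [pd_def]
    have key : ∀ i j,
        ∑ c, (pd (fun y => Λ y i c) x j * T x c + Λ x i c * pd (fun y => T y c) x j)
          = ∑ c, (pd (fun y => Λ y j c) x i * T x c + Λ x j c * pd (fun y => T y c) x i) := by
      intro i j
      have h1 := hclosed x i j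
      rw [pd_def, pd_def] at h1
      rw [pd_sum_mul (fun y c => Λ y i c) T (fun c => (hΛ' i c).differentiable (by simp))
          (fun c => (hT' c).differentiable (by simp)) x j,
        pd_sum_mul (fun y c => Λ y j c) T (fun c => (hΛ' j c).differentiable (by simp))
          (fun c => (hT' c).differentiable (by simp)) x i] at h1
      exact h1
    -- multiply key by V x a i * V x b j and sum over i, j
    have comb : (∑ i, ∑ j, ∑ c, V x a i * V x b j * (pd (fun y => Λ y i c) x j * T x c))
        + (∑ i, ∑ j, ∑ c, V x a i * V x b j * (Λ x i c * pd (fun y => T y c) x j))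
        = (∑ i, ∑ j, ∑ c, V x a i * V x b j * (pd (fun y => Λ y j c) x i * T x c))
        + (∑ i, ∑ j, ∑ c, V x a i * V x b j * (Λ x j c * pd (fun y => T y c) x i)) := by
      have h3 : ∑ i, ∑ j, ∑ c,
            (V x a i * V x b j * (pd (fun y => Λ y i c) x j * T x c)
              + V x a i * V x b j * (Λ x i c * pd (fun y => T y c) x j))
          = ∑ i, ∑ j, ∑ c,
            (V x a i * V x b j * (pd (fun y => Λ y j c) x i * T x c)
              + V x a i * V x b j * (Λ x j c * pd (fun y => T y c) x i)) := by
        refine Finset.sum_congr rfl fun i _ => Finset.sum_congr rfl fun j _ => ?_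
        calc ∑ c, (V x a i * V x b j * (pd (fun y => Λ y i c) x j * T x c)
              + V x a i * V x b j * (Λ x i c * pd (fun y => T y c) x j))
            = V x a i * V x b j * ∑ c, (pd (fun y => Λ y i c) x j * T x c
              + Λ x i c * pd (fun y => T y c) x j) := by
              rw [Finset.mul_sum]
              exact Finset.sum_congr rfl fun c _ => by ring
          _ = V x a i * V x b j * ∑ c, (pd (fun y => Λ y j c) x i * T x c
              + Λ x j c * pd (fun y => T y c) x i) := by rw [key i j]
          _ = ∑ c, (V x a i * V x b j * (pd (fun y => Λ y j c) x i * T x c)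
              + V x a i * V x b j * (Λ x j c * pd (fun y => T y c) x i)) := by
              rw [Finset.mul_sum]
              exact Finset.sum_congr rfl fun c _ => by ring
      simpa only [Finset.sum_add_distrib] using h3
    -- contraction identities
    have e1 : (∑ i, ∑ j, ∑ c, V x a i * V x b j * (Λ x i c * pd (fun y => T y c) x j))
        = ∑ i, V x b i * pd (fun y => T y a) x i := by
      rw [Finset.sum_comm]
      calc ∑ j, ∑ i, ∑ c, V x a i * V x b j * (Λ x i c * pd (fun y => T y c) x j)
          = ∑ j, ∑ c, (∑ i, V x a i * Λ x i c) * (V x b j * pd (fun y => T y c) x j) := by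
            refine Finset.sum_congr rfl fun j _ => ?_
            rw [Finset.sum_comm]
            refine Finset.sum_congr rfl fun c _ => ?_
            rw [Finset.sum_mul]
            exact Finset.sum_congr rfl fun i _ => by ring
        _ = ∑ j, V x b j * pd (fun y => T y a) x j := by
            refine Finset.sum_congr rfl fun j _ => ?_
            simp only [hright x a]
            simp [ite_mul]
    have e2 : (∑ i, ∑ j, ∑ c, V x a i * V x b j * (Λ x j c * pd (fun y => T y c) x i))
        = ∑ i, V x a i * pd (fun y => T y b) x i := by
      calc ∑ i, ∑ j, ∑ c, V x a i * V x b j * (Λ x j c * pd (fun y => T y c) x i)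
          = ∑ i, ∑ c, (∑ j, V x b j * Λ x j c) * (V x a i * pd (fun y => T y c) x i) := by
            refine Finset.sum_congr rfl fun i _ => ?_
            rw [Finset.sum_comm]
            refine Finset.sum_congr rfl fun c _ => ?_
            rw [Finset.sum_mul]
            exact Finset.sum_congr rfl fun j _ => by ring
        _ = ∑ i, V x a i * pd (fun y => T y b) x i := by
            refine Finset.sum_congr rfl fun i _ => ?_
            simp only [hright x b]
            simp [ite_mul]
    -- reshape the C-sum
    have e3 : (∑ d, (∑ i, ∑ j, V x a i * V x b j *
          (pd (fun y => Λ y i d) x j - pd (fun y => Λ y j d) x i)) * T x d)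
        = (∑ i, ∑ j, ∑ c, V x a i * V x b j * (pd (fun y => Λ y i c) x j * T x c))
          - (∑ i, ∑ j, ∑ c, V x a i * V x b j * (pd (fun y => Λ y j c) x i * T x c)) := by
      have h4 : ∀ d, (∑ i, ∑ j, V x a i * V x b j *
            (pd (fun y => Λ y i d) x j - pd (fun y => Λ y j d) x i)) * T x d
          = ∑ i, ∑ j, (V x a i * V x b j * (pd (fun y => Λ y i d) x j * T x d)
            - V x a i * V x b j * (pd (fun y => Λ y j d) x i * T x d)) := by
        intro d
        rw [Finset.sum_mul]
        refine Finset.sum_congr rfl fun i _ => ?_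
        rw [Finset.sum_mul]
        exact Finset.sum_congr rfl fun j _ => by ring
      calc (∑ d, (∑ i, ∑ j, V x a i * V x b j *
            (pd (fun y => Λ y i d) x j - pd (fun y => Λ y j d) x i)) * T x d)
          = ∑ d, ∑ i, ∑ j, (V x a i * V x b j * (pd (fun y => Λ y i d) x j * T x d)
            - V x a i * V x b j * (pd (fun y => Λ y j d) x i * T x d)) := by
            exact Finset.sum_congr rfl fun d _ => h4 d
        _ = ∑ i, ∑ j, ∑ d, (V x a i * V x b j * (pd (fun y => Λ y i d) x j * T x d)
            - V x a i * V x b j * (pd (fun y => Λ y j d) x i * T x d)) := by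
            rw [Finset.sum_comm]
            exact Finset.sum_congr rfl fun i _ => Finset.sum_comm
        _ = _ := by simp only [Finset.sum_sub_distrib]
    linarith [comb, e1, e2, e3]
end

section
/- Let δ be a degree −1 differential on a non-negatively graded module acyclic in positive degrees, and consider the chain of equations δΩ^{(n+1)} = K_n(Ω^{(0)},…,Ω^{(n)}), n ≥ 0, where each right-hand side K_n is δ-closed whenever the previous equations hold. Then a solution (Ω^{(n)})_{n≥0} exists for any prescribed Ω^{(0)}, Ω^{(1)} solving the first equation. -/
open Classical in
/-- Auxiliary inductive construction of (truncated) partial solutions. -/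
noncomputable def brstAux {V : Type*} [AddCommGroup V] [Module ℝ V]
    (P : ℕ → Submodule ℝ V) (δ : V →ₗ[ℝ] V) (K : (ℕ → V) → ℕ → V)
    (Ω₀ Ω₁ : V) : ℕ → (ℕ → V)
  | 0 => fun m => if m = 0 then Ω₀ else if m = 1 then Ω₁ else 0
  | n+1 => Function.update (brstAux P δ K Ω₀ Ω₁ n) (n+2)
      (if h : ∃ b, b ∈ P (n+2) ∧ δ b = K (brstAux P δ K Ω₀ Ω₁ n) (n+1)
       then h.choose else 0)

/-- existence of the BRST charge by homological perturbation:
Let `δ` be a degree −1 differential on a non-negatively graded module (degrees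
recorded by the submodules `P n`), acyclic in positive degrees.  Consider the
chain of equations `δ Ω^{(n+1)} = K_n(Ω^{(0)},…,Ω^{(n)})`, where each `K_n`
depends only on the first `n+1` components, has the right degree, and is
`δ`-closed whenever the previous equations hold.  Then for any prescribed
`Ω^{(0)}` and `Ω^{(1)}` solving the first equation, a full solution
`(Ω^{(n)})_{n≥0}` exists. -/
theorem brst_charge_exists
    {V : Type*} [AddCommGroup V] [Module ℝ V]
    (P : ℕ → Submodule ℝ V) (δ : V →ₗ[ℝ] V)
    (hδ2 : ∀ v, δ (δ v) = 0)
    (hδdeg : ∀ n, ∀ v ∈ P (n + 1), δ v ∈ P n)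
    (hacyclic : ∀ n, 0 < n → ∀ a ∈ P n, δ a = 0 → ∃ b ∈ P (n + 1), δ b = a)
    (K : (ℕ → V) → ℕ → V)
    (hKdeg : ∀ Ω : ℕ → V, (∀ m, Ω m ∈ P m) → ∀ n, K Ω n ∈ P n)
    (hKdep : ∀ (Ω Ω' : ℕ → V) (n : ℕ), (∀ m ≤ n, Ω m = Ω' m) → K Ω n = K Ω' n)
    (hKclosed : ∀ (Ω : ℕ → V) (n : ℕ),
      (∀ m < n, δ (Ω (m + 1)) = K Ω m) → δ (K Ω n) = 0) :
    ∀ Ω₀ Ω₁ : V, Ω₀ ∈ P 0 → Ω₁ ∈ P 1 →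
      (∀ Ω : ℕ → V, Ω 0 = Ω₀ → δ Ω₁ = K Ω 0) →
      ∃ Ω : ℕ → V, (∀ n, Ω n ∈ P n) ∧ Ω 0 = Ω₀ ∧ Ω 1 = Ω₁ ∧
        ∀ n, δ (Ω (n + 1)) = K Ω n := by
  intro Ω₀ Ω₁ h0 h1 hfirst
  classical
  set G : ℕ → (ℕ → V) := brstAux P δ K Ω₀ Ω₁ with hG
  -- agreement of successive stages on low indices
  have hagree : ∀ n m, m ≤ n + 1 → G (n+1) m = G n m := by
    intro n m hm
    have : m ≠ n + 2 := by omega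
    simp [hG, brstAux, Function.update_of_ne this]
  have hagree' : ∀ n n' m, n ≤ n' → m ≤ n + 1 → G n' m = G n m := by
    intro n n' m hn hm
    induction n' with
    | zero => 
      obtain rfl : n = 0 := Nat.le_zero.mp hn
      rfl
    | succ k ih =>
      rcases Nat.lt_or_ge n (k+1) with h | h
      · rw [hagree k m (by omega), ih (by omega)]
      · have : n = k + 1 := by omega
        subst this; rfl
  -- main induction: membership and the equations up to stage n
  have main : ∀ n, (∀ m, G n m ∈ P m) ∧ (∀ m ≤ n, δ (G n (m+1)) = K (G n) m) := by
    intro n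
    induction n with
    | zero =>
      constructor
      · intro m
        rcases m with _ | _ | m
        · simpa [hG, brstAux] using h0
        · simpa [hG, brstAux] using h1
        · simp [hG, brstAux, Submodule.zero_mem]
      · intro m hm
        interval_cases m
        have : G 0 0 = Ω₀ := by simp [hG, brstAux]
        have h := hfirst (G 0) this
        simpa [hG, brstAux] using h
    | succ n ih =>
      obtain ⟨ihmem, iheq⟩ := ih
      -- K (G n) (n+1) is closed
      have hclosed : δ (K (G n) (n+1)) = 0 := by
        apply hKclosed
        intro m hm
        exact iheq m (by omega)
      have hKmem : K (G n) (n+1) ∈ P (n+1) := hKdeg (G n) ihmem (n+1)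
      obtain ⟨b, hbP, hbδ⟩ := hacyclic (n+1) (by omega) _ hKmem hclosed
      have hex : ∃ b, b ∈ P (n+2) ∧ δ b = K (G n) (n+1) := ⟨b, hbP, hbδ⟩
      have hGs : G (n+1) = Function.update (G n) (n+2) hex.choose := by
        rw [hG] at hex; simp [hG, brstAux, hex]
      have hval : G (n+1) (n+2) = hex.choose := by
        rw [hGs]; simp
      obtain ⟨hcP, hcδ⟩ := hex.choose_spec
      have hKeq : ∀ m ≤ n + 1, K (G (n+1)) m = K (G n) m := by
        intro m hm
        exact hKdep _ _ m (fun k hk => hagree n k (by omega))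
      constructor
      · intro m
        rcases eq_or_ne m (n+2) with rfl | hne
        · rw [hval]; exact hcP
        · rw [hGs, Function.update_of_ne hne]; exact ihmem m
      · intro m hm
        rcases Nat.lt_or_ge m (n+1) with h | h
        · rw [hagree n (m+1) (by omega), iheq m (by omega), (hKeq m (by omega)).symm]
        · have : m = n + 1 := by omega
          subst this
          rw [hval, hcδ, hKeq (n+1) le_rfl]
  -- the diagonal sequence
  refine ⟨fun n => G n n, ?_, ?_, ?_, ?_⟩
  · intro n; exact (main n).1 n
  · simp [hG, brstAux]
  · show G 1 1 = Ω₁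
    rw [hagree' 0 1 1 (by omega) (by omega)]; simp [hG, brstAux]
  · intro n
    have h1' : δ (G (n+1) (n+1)) = K (G (n+1)) n := (main (n+1)).2 n (by omega)
    rw [h1']
    apply hKdep
    intro m hm
    exact hagree' m (n+1) m (by omega) (by omega)
end
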